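/- Let D be a rich domain all of whose preferences are top-separable, and let f : D^n → A (n ≥ 2) be a strategy-proof unanimous rule satisfying the tops-only property. For any voter i, preferences P_i, P_i' ∈ D whose tops differ in exactly one component s, and any profile P_{-i} ∈ D^{n-1}, the outcomes f(P_i, P_{-i}) and f(P_i', P_{-i}) agree on every component t ∈ M with t ≠ s. -/

import Mathlib

noncomputable section

universe u

/-- A (strict) preference: a complete, antisymmetric, transitive binary relation,
i.e. a strict linear order, on `α`.  `rel a b` reads "`a` is strictly preferred to `b`". -/
structure Pref (α : Type u) : Type u where
  rel : α → α → Prop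
  asymm : ∀ a b, rel a b → ¬ rel b a
  trans : ∀ a b c, rel a b → rel b c → rel a c
  total : ∀ a b, a ≠ b → rel a b ∨ rel b a

namespace Pref

variable {α : Type u}

theorem exists_top [Finite α] [Nonempty α] (P : Pref α) :
    ∃ a : α, ∀ b, b ≠ a → P.rel a b := by
  haveI : IsTrans α P.rel := ⟨P.trans⟩
  haveI : IsIrrefl α P.rel := ⟨fun a h => P.asymm a a h h⟩
  obtain ⟨a, -, ha⟩ :=
    (Finite.wellFounded_of_trans_of_irrefl P.rel).has_min Set.univ
      ⟨Classical.arbitrary α, trivial⟩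
  refine ⟨a, fun b hb => ?_⟩
  rcases P.total a b (fun h => hb h.symm) with h | h
  · exact h
  · exact absurd h (ha b trivial)

/-- The top-ranked alternative `r₁(P)` of a preference. -/
def top [Finite α] [Nonempty α] (P : Pref α) : α := P.exists_top.choose

theorem top_spec [Finite α] [Nonempty α] (P : Pref α) :
    ∀ b, b ≠ P.top → P.rel P.top b := P.exists_top.choose_spec

/-- `rank P a = k` means that `a` is the `k`-th ranked alternative `r_k(P)`. -/
def rank (P : Pref α) (a : α) : ℕ := {b | P.rel b a}.ncard + 1

/-- The induced marginal preference `[P]^s` on component `s`: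
derived from `P` by referring to the off-`s` components of the top alternative. -/
def marg {m : ℕ} {A : Fin m → Type u} [∀ s, Fintype (A s)] [∀ s, Nonempty (A s)]
    (P : Pref (∀ s, A s)) (s : Fin m) : Pref (A s) where
  rel x y := P.rel (Function.update P.top s x) (Function.update P.top s y)
  asymm _ _ h := P.asymm _ _ h
  trans _ _ _ h₁ h₂ := P.trans _ _ _ h₁ h₂
  total x y hxy := P.total _ _ fun h => hxy (by
    have := congrFun h s
    simpa using this)

end Pref

section SocialChoice

variable {m : ℕ} {A : Fin m → Type u}

/-- `a` and `b` are similar, differing exactly in component `s`: `M(a,b) = {s}`. -/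
def SimilarAt (a b : ∀ s, A s) (s : Fin m) : Prop :=
  a s ≠ b s ∧ ∀ t, t ≠ s → a t = b t

/-- The "slice" `(A^s, x^{-s})` of alternatives agreeing with `x` off component `s`. -/
def Slice (s : Fin m) (x : ∀ t, A t) : Set (∀ t, A t) :=
  {a | ∀ t, t ≠ s → a t = x t}

variable [∀ s, Fintype (A s)] [∀ s, Nonempty (A s)]

/-- The induced marginal domain `[D]^s`. -/
def margDomain (D : Set (Pref (∀ s, A s))) (s : Fin m) : Set (Pref (A s)) :=
  (fun P => Pref.marg P s) '' D

/-- A preference is minimal-richness witnessed: every alternative is some preference's top. -/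
def MinimallyRich (D : Set (Pref (∀ s, A s))) : Prop :=
  ∀ a : ∀ s, A s, ∃ P ∈ D, Pref.top P = a

/-- A separable preference. -/
def Separable (P : Pref (∀ s, A s)) : Prop :=
  ∃ Q : ∀ s, Pref (A s), ∀ (s : Fin m) (a b : ∀ t, A t),
    SimilarAt a b s → (Q s).rel (a s) (b s) → P.rel a b

/-- A top-separable preference. -/
def TopSeparable (P : Pref (∀ s, A s)) : Prop :=
  ∀ (s : Fin m) (a b : ∀ t, A t), SimilarAt a b s → a s = Pref.top P s → P.rel a b

end SocialChoice

/-- Two preferences are complete reversals. -/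
def CompleteReversals {α : Type u} (P P' : Pref α) : Prop :=
  ∀ a b, P.rel a b ↔ P'.rel b a

section SCFProps

variable {β : Type u}

/-- Unanimity of a (marginal) social choice function on domain `E`. -/
def Unanimous [Finite β] [Nonempty β] (E : Set (Pref β)) {n : ℕ}
    (f : (Fin n → E) → β) : Prop :=
  ∀ (p : Fin n → E) (a : β), (∀ i, Pref.top (p i).1 = a) → f p = a

/-- Strategy-proofness of a (marginal) social choice function on domain `E`. -/
def StrategyProof (E : Set (Pref β)) {n : ℕ} (f : (Fin n → E) → β) : Prop :=
  ∀ (p : Fin n → E) (i : Fin n) (Q : E),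
    f p ≠ f (Function.update p i Q) →
    (p i).1.rel (f p) (f (Function.update p i Q))

/-- The tops-only property. -/
def TopsOnly [Finite β] [Nonempty β] (E : Set (Pref β)) {n : ℕ}
    (f : (Fin n → E) → β) : Prop :=
  ∀ p p' : Fin n → E, (∀ i, Pref.top (p i).1 = Pref.top (p' i).1) → f p = f p'

end SCFProps

section Decomp

variable {m : ℕ} {A : Fin m → Type u} [∀ s, Fintype (A s)] [∀ s, Nonempty (A s)]

/-- The profile of induced marginal preferences `([P₁]^s, …, [Pₙ]^s)`. -/
def margProfile (D : Set (Pref (∀ s, A s))) (s : Fin m) {n : ℕ}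
    (p : Fin n → D) : Fin n → (margDomain D s) :=
  fun i => ⟨Pref.marg (p i).1 s, ⟨(p i).1, (p i).2, rfl⟩⟩

/-- `f` is decomposed by the family of marginal SCFs `g`. -/
def Decomposable (D : Set (Pref (∀ s, A s))) {n : ℕ}
    (f : (Fin n → D) → (∀ s, A s))
    (g : ∀ s : Fin m, (Fin n → (margDomain D s)) → A s) : Prop :=
  ∀ p : Fin n → D, ∀ s, f p s = g s (margProfile D s p)

/-- A decomposable domain: for every `n ≥ 2` and every SCF, being a strategy-proof
unanimous rule is equivalent to being decomposable into strategy-proof unanimous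
marginal rules. -/
def DecomposableDomain (D : Set (Pref (∀ s, A s))) : Prop :=
  ∀ n : ℕ, 2 ≤ n → ∀ f : (Fin n → D) → (∀ s, A s),
    (Unanimous D f ∧ StrategyProof D f) ↔
      ∃ g : ∀ s : Fin m, (Fin n → (margDomain D s)) → A s,
        Decomposable D f g ∧
        ∀ s, Unanimous (margDomain D s) (g s) ∧ StrategyProof (margDomain D s) (g s)

/-- Diversity⁺: `D` contains two separable preferences that are complete reversals. -/
def DiversityPlus (D : Set (Pref (∀ s, A s))) : Prop :=
  ∃ P ∈ D, ∃ P' ∈ D, Separable P ∧ Separable P' ∧ CompleteReversals P P'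

end Decomp

/-- Adjacency of two preferences: they coincide except that two alternatives ranked
consecutively in `P` occupy the same two positions in reversed order in `P'`. -/
def Adjacent {β : Type u} (P P' : Pref β) : Prop :=
  ∃ a b : β, a ≠ b ∧
    P.rank b = P.rank a + 1 ∧ P'.rank b = P.rank a ∧ P'.rank a = P.rank a + 1 ∧
    ∀ c, c ≠ a → c ≠ b → P.rank c = P'.rank c

section AdjPlus

variable {m : ℕ} {A : Fin m → Type u} [∀ s, Fintype (A s)] [∀ s, Nonempty (A s)]

/-- Adjacency⁺ of two (separable) preferences. -/
def AdjacentPlus (P P' : Pref (∀ s, A s)) : Prop :=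
  Separable P ∧ Separable P' ∧
  ∃ (s : Fin m) (a b : A s), a ≠ b ∧
    (∀ z : ∀ t, A t,
      P.rank (Function.update z s b) = P.rank (Function.update z s a) + 1 ∧
      P'.rank (Function.update z s b) = P.rank (Function.update z s a) ∧
      P'.rank (Function.update z s a) = P.rank (Function.update z s a) + 1) ∧
    ∀ c : ∀ t, A t, c s ≠ a → c s ≠ b → P.rank c = P'.rank c

/-- Edges of the graph `G_{~/~⁺}`: adjacency or adjacency⁺. -/
def AdjEdge (P P' : Pref (∀ s, A s)) : Prop :=
  Adjacent P P' ∨ AdjacentPlus P P'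

end AdjPlus

/-- A path in a graph with edge relation `edge` and vertex set `S`, connecting `x` to `y`. -/
def IsPath {β : Type u} (edge : β → β → Prop) (S : Set β) (x y : β)
    (l : List β) : Prop :=
  2 ≤ l.length ∧ l.Nodup ∧ l.head? = some x ∧ l.getLast? = some y ∧
    (∀ z ∈ l, z ∈ S) ∧ List.Chain' edge l

/-- A path of preferences has `{a,b}`-restoration if the relative ranking of `a` and `b`
flips more than once along the path. -/
def HasRestoration {β : Type u} (l : List (Pref β)) (a b : β) : Prop :=
  ∃ o p q : Fin l.length, o < p ∧ p < q ∧
    (((l.get o).rel a b ∧ (l.get p).rel b a ∧ (l.get q).rel a b) ∨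
     ((l.get o).rel b a ∧ (l.get p).rel a b ∧ (l.get q).rel b a))

section RichDom

variable {m : ℕ} {A : Fin m → Type u} [∀ s, Fintype (A s)] [∀ s, Nonempty (A s)]

/-- The Interior⁺ property. -/
def InteriorPlus (D : Set (Pref (∀ s, A s))) : Prop :=
  ∀ P ∈ D, ∀ P' ∈ D, P ≠ P' → Pref.top P = Pref.top P' →
    ∃ l : List (Pref (∀ s, A s)),
      IsPath AdjEdge D P P' l ∧ ∀ Q ∈ l, Pref.top Q = Pref.top P

/-- The Exterior⁺ property (including the no-detour condition). -/
def ExteriorPlus (D : Set (Pref (∀ s, A s))) : Prop :=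
  ∀ P ∈ D, ∀ P' ∈ D, Pref.top P ≠ Pref.top P' →
    (∀ a b : ∀ s, A s, ∃ l : List (Pref (∀ s, A s)),
        IsPath AdjEdge D P P' l ∧ ¬ HasRestoration l a b) ∧
    ∀ s : Fin m, SimilarAt (Pref.top P) (Pref.top P') s →
      ∃ l : List (Pref (∀ s, A s)),
        IsPath AdjEdge D P P' l ∧ ∀ Q ∈ l, ∀ t, t ≠ s → Pref.top Q t = Pref.top P t

/-- A rich domain: minimally rich, diversity⁺, Interior⁺ and Exterior⁺. -/
def RichDomain (D : Set (Pref (∀ s, A s))) : Prop :=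
  MinimallyRich D ∧ DiversityPlus D ∧ InteriorPlus D ∧ ExteriorPlus D

end RichDom

/-- The weak interval `⟨x,y⟩` w.r.t. a linear order. -/
def wInterval {β : Type u} (lin : LinearOrder β) (x y : β) : Set β :=
  {z | (lin.le x z ∧ lin.le z y) ∨ (lin.le y z ∧ lin.le z x)}

/-- The strict (open) interval `Int⟨x,y⟩` w.r.t. a linear order. -/
def sInterval {β : Type u} (lin : LinearOrder β) (x y : β) : Set β :=
  {z | (lin.lt x z ∧ lin.lt z y) ∨ (lin.lt y z ∧ lin.lt z x)}

/-- `x` and `y` are marginal thresholds w.r.t. `lin`. -/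
def MarginalThresholds {β : Type u} (lin : LinearOrder β) (x y : β) : Prop :=
  x = y ∨ (x ≠ y ∧ 3 ≤ (wInterval lin x y).ncard)

/-- `x` and `y` are strongly connected in the marginal domain `E`: `x ≈ y`. -/
def StronglyConnected {β : Type u} (E : Set (Pref β)) (x y : β) : Prop :=
  ∃ Q ∈ E, ∃ Q' ∈ E,
    Pref.rank Q x = 1 ∧ Pref.rank Q y = 2 ∧ Pref.rank Q' y = 1 ∧ Pref.rank Q' x = 2 ∧
    ∀ z, z ≠ x → z ≠ y → Pref.rank Q z = Pref.rank Q' z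

/-- Edges of the graph `G_≈`. -/
def scEdge {β : Type u} (E : Set (Pref β)) (x y : β) : Prop :=
  x ≠ y ∧ StronglyConnected E x y

/-- The graph with edge relation `edge` on vertex set `B` is connected. -/
def GraphConnectedOn {β : Type u} (edge : β → β → Prop) (B : Set β) : Prop :=
  ∀ x ∈ B, ∀ y ∈ B, x ≠ y → ∃ l : List β, IsPath edge B x y l

/-- `v` is a leaf of the graph with edge relation `edge` on vertex set `B`:
it has a unique neighbor. -/
def IsLeaf {β : Type u} (edge : β → β → Prop) (B : Set β) (v : β) : Prop :=
  v ∈ B ∧ ∃! w, w ∈ B ∧ edge v w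

/-- A hybrid marginal preference on `lin` w.r.t. marginal thresholds `ylo`, `yhi`. -/
def HybridPref {β : Type u} [Finite β] [Nonempty β] (lin : LinearOrder β)
    (ylo yhi : β) (Q : Pref β) : Prop :=
  ∀ a b : β, a ≠ b → a ∈ sInterval lin (Pref.top Q) b →
    a ∉ sInterval lin ylo yhi → Q.rel a b

section MDH

variable {m : ℕ} {A : Fin m → Type u} [∀ s, Fintype (A s)] [∀ s, Nonempty (A s)]

/-- `xlo` and `xhi` are thresholds: marginal thresholds on every component. -/
def Thresholds (prec : ∀ s, LinearOrder (A s)) (xlo xhi : ∀ s, A s) : Prop :=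
  ∀ s, MarginalThresholds (prec s) (xlo s) (xhi s)

/-- A multidimensional hybrid preference on `≺ = ∏ prec s` w.r.t. thresholds `xlo`, `xhi`. -/
def MDHybrid (prec : ∀ s, LinearOrder (A s)) (xlo xhi : ∀ s, A s)
    (P : Pref (∀ s, A s)) : Prop :=
  ∀ (s : Fin m) (a b : ∀ t, A t), SimilarAt a b s →
    (a s = Pref.top P s → P.rel a b) ∧
    (a s ∈ sInterval (prec s) (Pref.top P s) (b s) →
      a s ∉ sInterval (prec s) (xlo s) (xhi s) → P.rel a b)

/-- A multidimensional single-peaked preference on `≺ = ∏ prec s`. -/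
def MSP (prec : ∀ s, LinearOrder (A s)) (P : Pref (∀ s, A s)) : Prop :=
  ∀ (s : Fin m) (a b : ∀ t, A t), SimilarAt a b s →
    a s ∈ wInterval (prec s) (Pref.top P s) (b s) → P.rel a b

/-- A multidimensional hybrid domain on `≺` w.r.t. thresholds `xlo`, `xhi`. -/
def MDHybridDomain (D : Set (Pref (∀ s, A s))) (prec : ∀ s, LinearOrder (A s))
    (xlo xhi : ∀ s, A s) : Prop :=
  Thresholds prec xlo xhi ∧
  (∀ P ∈ D, MDHybrid prec xlo xhi P) ∧
  ∀ s, GraphConnectedOn (scEdge (margDomain D s)) Set.univ ∧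
    (xlo s ≠ xhi s →
      ∀ v, ¬ IsLeaf (scEdge (margDomain D s)) (wInterval (prec s) (xlo s) (xhi s)) v)

/-- Strong connectedness⁺ of two alternatives: `a ≈⁺ b`. -/
def SCPlus (D : Set (Pref (∀ s, A s))) (a b : ∀ s, A s) : Prop :=
  ∃ P ∈ D, ∃ P' ∈ D, Pref.top P = a ∧ Pref.top P' = b ∧ AdjacentPlus P P'

end MDH

/-- The outcome of the fixed-ballot formula
`max_{J ⊆ N} ( min_{i ∈ J} ( r₁(Qᵢ), b_J ) )`. -/
def fbrValue {β : Type u} (lin : LinearOrder β) {n : ℕ} [Fintype β]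
    (bal : Finset (Fin n) → β) (tops : Fin n → β) : β :=
  letI := lin
  letI : DecidableEq β := lin.toDecidableEq
  Finset.univ.sup' ⟨∅, Finset.mem_univ _⟩
    fun J : Finset (Fin n) =>
      (insert (bal J) (J.image tops)).inf' (Finset.insert_nonempty _ _) id

/-- Fixed ballots: ballot unanimity and monotonicity. -/
def FBRBallots {β : Type u} [Fintype β] [Nonempty β] (lin : LinearOrder β) {n : ℕ}
    (bal : Finset (Fin n) → β) : Prop :=
  bal ∅ = @Finset.min' β lin Finset.univ Finset.univ_nonempty ∧
  bal Finset.univ = @Finset.max' β lin Finset.univ Finset.univ_nonempty ∧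
  ∀ J J' : Finset (Fin n), J ⊂ J' → lin.le (bal J) (bal J')

/-- A fixed ballot rule (FBR) on the linear order `lin`. -/
def IsFBR {β : Type u} [Fintype β] [Nonempty β] (lin : LinearOrder β)
    (E : Set (Pref β)) {n : ℕ} (f : (Fin n → E) → β) : Prop :=
  ∃ bal : Finset (Fin n) → β, FBRBallots lin bal ∧
    ∀ p : Fin n → E, f p = fbrValue lin bal fun i => Pref.top (p i).1

/-- An `(xlo, xhi)`-FBR: an FBR that additionally satisfies the
constrained-dictatorship condition. -/
def IsConstrainedFBR {β : Type u} [Fintype β] [Nonempty β] (lin : LinearOrder β)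
    (xlo xhi : β) (E : Set (Pref β)) {n : ℕ} (f : (Fin n → E) → β) : Prop :=
  ∃ bal : Finset (Fin n) → β, FBRBallots lin bal ∧
    (∀ p : Fin n → E, f p = fbrValue lin bal fun i => Pref.top (p i).1) ∧
    ∃ i : Fin n, ∀ J : Finset (Fin n),
      (i ∈ J → lin.le xhi (bal J)) ∧ (i ∉ J → lin.le (bal J) xlo)


/-! Along an Exterior⁺ path from `P_i` to `P_i'` on which every top keeps the components
`t ≠ s` of `r₁(P_i)`, voter `i` moves across one edge of `G_{~/~⁺}` at a time. If the outcome
changes across an edge `R — R'`, strategy-proofness forces `R` and `R'` to rank the two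
outcomes oppositely, and an edge reverses only very special pairs: for an adjacency, the two
tops themselves; for an adjacency⁺ in component `s'`, two alternatives that differ only in
`s'`, where `s'` is also the only component in which the tops differ. Either way the outcome
changes only in components where the tops of `R` and `R'` differ, hence never in `t ≠ s`. -/

open Function

namespace Pref

variable {α : Type u}

theorem one_le_rank (P : Pref α) (x : α) : 1 ≤ P.rank x :=
  Nat.le_add_left 1 _

variable [Finite α]

theorem rank_lt_rank_of_rel (P : Pref α) {x y : α} (h : P.rel x y) : P.rank x < P.rank y := by
  have hss : {b | P.rel b x} ⊂ {b | P.rel b y} :=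
    ⟨fun c hc => P.trans _ _ _ hc h, fun hsub => P.asymm x x (hsub h) (hsub h)⟩
  simpa [rank] using Set.ncard_lt_ncard hss (Set.toFinite _)

theorem rank_injective (P : Pref α) : Injective P.rank := by
  intro x y h
  by_contra hne
  rcases P.total x y hne with h' | h' <;> have := P.rank_lt_rank_of_rel h' <;> omega

theorem rank_top [Nonempty α] (P : Pref α) : P.rank P.top = 1 := by
  have : {b | P.rel b P.top} = ∅ := Set.eq_empty_of_forall_notMem fun c hc => by
    rcases eq_or_ne c P.top with rfl | hne
    · exact P.asymm _ _ hc hc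
    · exact P.asymm _ _ (P.top_spec c hne) hc
  simp [rank, this]

theorem eq_top_of_rank_eq_one [Nonempty α] (P : Pref α) {x : α} (h : P.rank x = 1) :
    x = P.top :=
  P.rank_injective (h.trans P.rank_top.symm)

end Pref

theorem Adjacent.eq_tops_of_rel_of_rel {β : Type u} [Finite β] [Nonempty β] {P P' : Pref β}
    (h : Adjacent P P') (htop : P.top ≠ P'.top) {x y : β} (hxy : P.rel x y)
    (hyx : P'.rel y x) : x = P.top ∧ y = P'.top := by
  obtain ⟨a, b, -, hb, h'b, h'a, hc⟩ := h
  have hxy := P.rank_lt_rank_of_rel hxy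
  have hyx := P'.rank_lt_rank_of_rel hyx
  have shift : ∀ c, (c = a ∧ P'.rank c = P.rank c + 1) ∨ (c = b ∧ P'.rank c + 1 = P.rank c) ∨
      P'.rank c = P.rank c := by
    intro c
    rcases eq_or_ne c a with rfl | hca
    · exact Or.inl ⟨rfl, h'a⟩
    rcases eq_or_ne c b with rfl | hcb
    · exact Or.inr (Or.inl ⟨rfl, by omega⟩)
    exact Or.inr (Or.inr (hc c hca hcb).symm)
  have hab : x = a ∧ y = b := by
    rcases shift x with ⟨rfl, hx⟩ | ⟨rfl, hx⟩ | hx <;>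
      rcases shift y with ⟨rfl, hy⟩ | ⟨rfl, hy⟩ | hy <;>
      first | exact ⟨rfl, rfl⟩ | omega
  -- A top of `P` other than `a` and `b` would keep its rank in `P'`.
  have ha : P.rank a = 1 := by
    by_contra hne
    have hta : P.top ≠ a := fun h => hne (h ▸ P.rank_top)
    have htb : P.top ≠ b := fun h => by
      have := h ▸ P.rank_top
      have := P.one_le_rank a
      omega
    exact htop (P'.eq_top_of_rank_eq_one ((hc _ hta htb).symm.trans P.rank_top))
  obtain ⟨rfl, rfl⟩ := hab
  exact ⟨P.eq_top_of_rank_eq_one ha, P'.eq_top_of_rank_eq_one (h'b.trans ha)⟩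

section Product

variable {m : ℕ} {A : Fin m → Type u} [∀ s, Fintype (A s)] [∀ s, Nonempty (A s)]

theorem AdjacentPlus.apply_eq_of_rel_of_rel {P P' : Pref (∀ s, A s)} (h : AdjacentPlus P P')
    (htop : P.top ≠ P'.top) {x y : ∀ s, A s} (hxy : P.rel x y) (hyx : P'.rel y x) {t : Fin m}
    (ht : P.top t = P'.top t) : x t = y t := by
  obtain ⟨-, -, s, a, b, hab, hz, hc⟩ := h
  have hxy := P.rank_lt_rank_of_rel hxy
  have hyx := P'.rank_lt_rank_of_rel hyx
  have shift : ∀ c : ∀ s, A s, (c s = a ∧ P'.rank c = P.rank c + 1) ∨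
      (c s = b ∧ P'.rank c + 1 = P.rank c ∧ P.rank (update c s a) + 1 = P.rank c) ∨
      P'.rank c = P.rank c := by
    intro c
    obtain ⟨h1, h2, h3⟩ := hz c
    rcases eq_or_ne (c s) a with hca | hca
    · rw [← hca, update_eq_self] at h3
      exact Or.inl ⟨hca, h3⟩
    rcases eq_or_ne (c s) b with hcb | hcb
    · rw [← hcb, update_eq_self] at h1 h2
      exact Or.inr (Or.inl ⟨hcb, by omega, h1.symm⟩)
    exact Or.inr (Or.inr (hc c hca hcb).symm)
  have hx : x = update y s a := by
    rcases shift x with ⟨-, hx⟩ | ⟨-, hx, -⟩ | hx <;>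
      rcases shift y with ⟨-, hy⟩ | ⟨-, hy, hya⟩ | hy <;> try omega
    exact P.rank_injective (by omega)
  have hPtop : P.top s = a := by
    rcases shift P.top with ⟨h, -⟩ | ⟨-, -, h⟩ | h
    · exact h
    · have := P.rank_top
      have := P.one_le_rank (update P.top s a)
      omega
    · exact absurd (P'.eq_top_of_rank_eq_one (h.trans P.rank_top)) htop
  have hP'top : P'.top s = b := by
    have h2 := (hz P.top).2.1
    rw [← hPtop, update_eq_self, P.rank_top] at h2
    rw [← P'.eq_top_of_rank_eq_one h2, update_self]
  have hts : t ≠ s := by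
    rintro rfl
    exact hab (hPtop ▸ hP'top ▸ ht)
  rw [hx, update_of_ne hts]

theorem AdjEdge.apply_eq_of_rel_of_rel {P P' : Pref (∀ s, A s)} (h : AdjEdge P P')
    (htop : P.top ≠ P'.top) {x y : ∀ s, A s} (hxy : P.rel x y) (hyx : P'.rel y x) {t : Fin m}
    (ht : P.top t = P'.top t) : x t = y t := by
  rcases h with h | h
  · obtain ⟨rfl, rfl⟩ := h.eq_tops_of_rel_of_rel htop hxy hyx
    exact ht
  · exact h.apply_eq_of_rel_of_rel htop hxy hyx ht

variable {D : Set (Pref (∀ s, A s))} {n : ℕ} {f : (Fin n → D) → ∀ s, A s}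

theorem StrategyProof.apply_update_eq_of_adjEdge (hsp : StrategyProof D f) (hto : TopsOnly D f)
    (p : Fin n → D) (i : Fin n) {R R' : D} (h : AdjEdge R.1 R'.1) {t : Fin m}
    (ht : R.1.top t = R'.1.top t) : f (update p i R) t = f (update p i R') t := by
  by_cases htop : R.1.top = R'.1.top
  · rw [hto (update p i R) (update p i R') fun j => ?_]
    rcases eq_or_ne j i with rfl | hj
    · simpa using htop
    · simp [update_of_ne hj]
  by_cases hf : f (update p i R) = f (update p i R')
  · rw [hf]
  have hR := hsp (update p i R) i R' (by simpa using hf)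
  have hR' := hsp (update p i R') i R (by simpa using Ne.symm hf)
  simp only [update_self, update_idem] at hR hR'
  exact h.apply_eq_of_rel_of_rel htop hR hR' ht

theorem StrategyProof.apply_update_eq_of_isPath (hsp : StrategyProof D f) (hto : TopsOnly D f)
    (p : Fin n → D) (i : Fin n) {R R' : D} {l : List (Pref (∀ s, A s))}
    (hl : IsPath AdjEdge D R.1 R'.1 l) {t : Fin m} (ht : ∀ Q ∈ l, Q.top t = R.1.top t) :
    f (update p i R) t = f (update p i R') t := by
  obtain ⟨-, -, hhead, hlast, hD, hchain⟩ := hl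
  obtain ⟨l, rfl⟩ := List.head?_eq_some_iff.mp hhead
  have key : ∃ hQ : R'.1 ∈ D, f (update p i ⟨R'.1, hQ⟩) t = f (update p i R) t :=
    (List.IsChain.iff_mem.mp hchain).induction
      (fun Q => ∃ hQ : Q ∈ D, f (update p i ⟨Q, hQ⟩) t = f (update p i R) t) _
      (fun Q Q' ⟨hQl, hQ'l, hedge⟩ ⟨hQ, hfQ⟩ => ⟨hD Q' hQ'l, hfQ ▸
        (hsp.apply_update_eq_of_adjEdge hto p i (R := ⟨Q, hQ⟩) hedge
          ((ht Q hQl).trans (ht Q' hQ'l).symm)).symm⟩)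
      (fun _ => ⟨R.2, rfl⟩) R'.1 (List.mem_of_getLast? hlast)
  exact key.2.symm

end Product

theorem stmt_9_general {m : ℕ} {A : Fin m → Type u}
    [∀ s, Fintype (A s)] [∀ s, Nonempty (A s)]
    (D : Set (Pref (∀ s, A s)))
    (hrich : RichDomain D)
    (n : ℕ)
    (f : (Fin n → D) → (∀ s, A s))
    (hsp : StrategyProof D f) (hto : TopsOnly D f)
    (p : Fin n → D) (i : Fin n) (Q : D) (s : Fin m)
    (hsim : SimilarAt (Pref.top (p i).1) (Pref.top Q.1) s) :
    ∀ t, t ≠ s → f p t = f (Function.update p i Q) t := by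
  intro t ht
  obtain ⟨l, hl, htops⟩ :=
    (hrich.2.2.2 (p i).1 (p i).2 Q.1 Q.2 fun h => hsim.1 (congrFun h s)).2 s hsim
  simpa using hsp.apply_update_eq_of_isPath hto p i hl fun R hR => htops R hR t ht

/-- if voter `i`'s tops under `P_i` and `P_i'` differ exactly in
component `s`, the outcomes agree on every other component. -/
theorem stmt_9 {m : ℕ} (hm : 2 ≤ m) {A : Fin m → Type u}
    [∀ s, Fintype (A s)] [∀ s, Nonempty (A s)]
    (hcard : ∀ s, 2 ≤ Fintype.card (A s))
    (D : Set (Pref (∀ s, A s)))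
    (hrich : RichDomain D)
    (hts : ∀ P ∈ D, TopSeparable P)
    (n : ℕ) (hn : 2 ≤ n)
    (f : (Fin n → D) → (∀ s, A s))
    (hu : Unanimous D f) (hsp : StrategyProof D f) (hto : TopsOnly D f)
    (p : Fin n → D) (i : Fin n) (Q : D) (s : Fin m)
    (hsim : SimilarAt (Pref.top (p i).1) (Pref.top Q.1) s) :
    ∀ t, t ≠ s → f p t = f (Function.update p i Q) t :=
  stmt_9_general D hrich n f hsp hto p i Q s hsim
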